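/- arXiv:2404.03838 — 2 statements merged into one kernel-verified Lean document; each statement's English description precedes it below -/
import Mathlib

section
/- Let x, y ∈ {0,1}^n with f_m(x) ≠ f_m(y) for some m ∈ {1,2}, and let b be minimal such that f_m^B(x_{B_b}) ≠ f_m^B(y_{B_b}). Then for every m' ∈ {1,2}: f_{m'}(x) < f_{m'}(y) if and only if f_{m'}^B(x_{B_b}) < f_{m'}^B(y_{B_b}), and f_{m'}(x) > f_{m'}(y) if and only if f_{m'}^B(x_{B_b}) > f_{m'}^B(y_{B_b}). -/
/-- Number of leading positions on which `x` agrees with the target string `z`. -/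
def LO (ℓ : ℕ) (z x : Fin ℓ → Bool) : ℕ :=
  (Finset.univ.filter (fun i : Fin ℓ => ∀ j ≤ i, x j = z j)).card

/-- The all-ones target string `z¹ = 1^ℓ`. -/
def zOne (ℓ : ℕ) : Fin ℓ → Bool := fun _ => true

/-- The target string `z² = 1^{ℓ-r} 0^r`. -/
def zTwo (ℓ r : ℕ) : Fin ℓ → Bool := fun i => decide (i.val < ℓ - r)

/-- The first base function `f₁^B(w) = (ℓ+1)·LO_{z¹}(w) + LO_{z²}(w)`. -/
def f1B (ℓ r : ℕ) (w : Fin ℓ → Bool) : ℕ :=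
  (ℓ + 1) * LO ℓ (zOne ℓ) w + LO ℓ (zTwo ℓ r) w

/-- The second base function `f₂^B(w) = (ℓ+1)·LO_{z²}(w) + LO_{z¹}(w)`. -/
def f2B (ℓ r : ℕ) (w : Fin ℓ → Bool) : ℕ :=
  (ℓ + 1) * LO ℓ (zTwo ℓ r) w + LO ℓ (zOne ℓ) w

/-- The base functions indexed by `m : Fin 2` (`0` for `f₁^B`, `1` for `f₂^B`). -/
def fB (ℓ r : ℕ) (m : Fin 2) : (Fin ℓ → Bool) → ℕ :=
  if m = 0 then f1B ℓ r else f2B ℓ r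

/-- The `b`-th block (0-based) of a bitstring of length `n = k·ℓ`. -/
def blockOf (k ℓ : ℕ) (x : Fin (k * ℓ) → Bool) (b : Fin k) : Fin ℓ → Bool :=
  fun j => x ⟨b.val * ℓ + j.val, by
    calc b.val * ℓ + j.val < b.val * ℓ + ℓ := Nat.add_lt_add_left j.isLt _
      _ = (b.val + 1) * ℓ := by ring
      _ ≤ k * ℓ := Nat.mul_le_mul_right ℓ b.isLt⟩

/-- The full objective `f_m(x) = Σ_b (ℓ+1)^{2(k-b)} f_m^B(x_{B_b})` (with 0-based
block index `b`, so the paper's exponent `2(k-b)` becomes `2(k-1-b)`). -/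
def fObj (k ℓ r : ℕ) (m : Fin 2) (x : Fin (k * ℓ) → Bool) : ℕ :=
  ∑ b : Fin k, (ℓ + 1) ^ (2 * (k - 1 - b.val)) * fB ℓ r m (blockOf k ℓ x b)

/-!
Each base value `f_m^B(w)` is a two-digit number in base `ℓ + 1` whose digits are the
prefix-agreement counts `LO_{z¹}(w)` and `LO_{z²}(w)` (both at most `ℓ`), so `f₁^B` and `f₂^B`
differ only in the order of the digits and hence have the same level sets. The full objective
`f_m` is then a `k`-digit number in base `(ℓ + 1)²` with digits `f_m^B(x_{B_b})`, and numbers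
with equally many digits compare lexicographically: the first block on which the digits differ
decides the comparison, for both objectives at once.
-/

lemma LO_le (ℓ : ℕ) (z x : Fin ℓ → Bool) : LO ℓ z x ≤ ℓ :=
  (Finset.card_filter_le _ _).trans_eq (Finset.card_fin ℓ)

lemma Nat.mul_add_eq_mul_add_iff {B a a' c c' : ℕ} (hc : c < B) (hc' : c' < B) :
    B * a + c = B * a' + c' ↔ a = a' ∧ c = c' := by
  refine ⟨fun h => ⟨?_, ?_⟩, fun ⟨ha, hc⟩ => ha ▸ hc ▸ rfl⟩
  · simpa [Nat.mul_add_div (hc.trans_le' (Nat.zero_le _)), Nat.div_eq_of_lt hc,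
      Nat.div_eq_of_lt hc'] using congrArg (· / B) h
  · simpa [Nat.mod_eq_of_lt hc, Nat.mod_eq_of_lt hc'] using congrArg (· % B) h

section BaseFunctions

variable {ℓ r : ℕ} {u v : Fin ℓ → Bool}

lemma f1B_eq_iff : f1B ℓ r u = f1B ℓ r v ↔
    LO ℓ (zOne ℓ) u = LO ℓ (zOne ℓ) v ∧ LO ℓ (zTwo ℓ r) u = LO ℓ (zTwo ℓ r) v :=
  Nat.mul_add_eq_mul_add_iff (Nat.lt_succ_of_le (LO_le ..)) (Nat.lt_succ_of_le (LO_le ..))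

lemma f2B_eq_iff : f2B ℓ r u = f2B ℓ r v ↔
    LO ℓ (zOne ℓ) u = LO ℓ (zOne ℓ) v ∧ LO ℓ (zTwo ℓ r) u = LO ℓ (zTwo ℓ r) v :=
  (Nat.mul_add_eq_mul_add_iff (Nat.lt_succ_of_le (LO_le ..)) (Nat.lt_succ_of_le (LO_le ..))).trans
    and_comm

lemma fB_eq_iff (m : Fin 2) : fB ℓ r m u = fB ℓ r m v ↔
    LO ℓ (zOne ℓ) u = LO ℓ (zOne ℓ) v ∧ LO ℓ (zTwo ℓ r) u = LO ℓ (zTwo ℓ r) v := by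
  fin_cases m
  exacts [f1B_eq_iff, f2B_eq_iff]

lemma fB_eq_iff_fB_eq (m m' : Fin 2) : fB ℓ r m u = fB ℓ r m v ↔ fB ℓ r m' u = fB ℓ r m' v :=
  (fB_eq_iff m).trans (fB_eq_iff m').symm

lemma fB_lt (m : Fin 2) (w : Fin ℓ → Bool) : fB ℓ r m w < (ℓ + 1) ^ 2 := by
  have h₁ := LO_le ℓ (zOne ℓ) w
  have h₂ := LO_le ℓ (zTwo ℓ r) w
  fin_cases m <;> simp [fB, f1B, f2B] <;> nlinarith

end BaseFunctions

section Lexicographic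

variable {M : ℕ}

lemma sum_pow_mul_fin_succ {k : ℕ} (F : Fin (k + 1) → ℕ) :
    ∑ i : Fin (k + 1), M ^ (k + 1 - 1 - i) * F i =
      M ^ k * F 0 + ∑ i : Fin k, M ^ (k - 1 - i) * F i.succ := by
  rw [Fin.sum_univ_succ]
  congr 1
  refine Finset.sum_congr rfl fun i _ => ?_
  rw [Fin.val_succ]
  congr 2
  omega

lemma sum_pow_mul_lt_pow : ∀ {k : ℕ} (F : Fin k → ℕ), (∀ i, F i < M) →
    ∑ i : Fin k, M ^ (k - 1 - i) * F i < M ^ k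
  | 0, _, _ => by simp
  | k + 1, F, hF => by
    rw [sum_pow_mul_fin_succ]
    calc M ^ k * F 0 + _ < M ^ k * F 0 + M ^ k :=
          by gcongr; exact sum_pow_mul_lt_pow (F ∘ Fin.succ) fun i => hF i.succ
      _ = M ^ k * (F 0 + 1) := by ring
      _ ≤ M ^ k * M := by gcongr; exact hF 0
      _ = M ^ (k + 1) := (pow_succ M k).symm

lemma sum_pow_mul_lt_of_lex : ∀ {k : ℕ} (F G : Fin k → ℕ) (b : Fin k), (∀ i, F i < M) →
    (∀ c < b, F c = G c) → F b < G b →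
    ∑ i : Fin k, M ^ (k - 1 - i) * F i < ∑ i : Fin k, M ^ (k - 1 - i) * G i
  | k + 1, F, G, b, hF, hpre, hlt => by
    rw [sum_pow_mul_fin_succ, sum_pow_mul_fin_succ]
    cases b using Fin.cases with
    | zero =>
      calc M ^ k * F 0 + _ < M ^ k * (F 0 + 1) := by
            rw [mul_add_one]; gcongr
            exact sum_pow_mul_lt_pow (F ∘ Fin.succ) fun i => hF i.succ
        _ ≤ M ^ k * G 0 := by gcongr; exact hlt
        _ ≤ _ := Nat.le_add_right _ _
    | succ b =>
      rw [hpre 0 (Fin.succ_pos b)]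
      exact Nat.add_lt_add_left (sum_pow_mul_lt_of_lex (F ∘ Fin.succ) (G ∘ Fin.succ) b
        (fun i => hF i.succ) (fun c hc => hpre c.succ (Fin.succ_lt_succ_iff.2 hc)) hlt) _

lemma sum_pow_mul_lt_iff {k : ℕ} {F G : Fin k → ℕ} {b : Fin k} (hF : ∀ i, F i < M)
    (hG : ∀ i, G i < M) (hpre : ∀ c < b, F c = G c) (hne : F b ≠ G b) :
    ∑ i : Fin k, M ^ (k - 1 - i) * F i < ∑ i : Fin k, M ^ (k - 1 - i) * G i ↔ F b < G b := by
  refine ⟨fun h => hne.lt_or_gt.resolve_right fun hgt => h.not_gt ?_,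
    sum_pow_mul_lt_of_lex F G b hF hpre⟩
  exact sum_pow_mul_lt_of_lex G F b hG (fun c hc => (hpre c hc).symm) hgt

end Lexicographic

lemma fObj_eq_sum (k ℓ r : ℕ) (m : Fin 2) (x : Fin (k * ℓ) → Bool) :
    fObj k ℓ r m x = ∑ b : Fin k, ((ℓ + 1) ^ 2) ^ (k - 1 - b) * fB ℓ r m (blockOf k ℓ x b) := by
  simp only [fObj, pow_mul]

theorem stmt_7_general (k ℓ r : ℕ)
    (x y : Fin (k * ℓ) → Bool) (m : Fin 2)
    (b : Fin k)
    (hb : fB ℓ r m (blockOf k ℓ x b) ≠ fB ℓ r m (blockOf k ℓ y b))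
    (hbmin : ∀ c : Fin k, c < b → fB ℓ r m (blockOf k ℓ x c) = fB ℓ r m (blockOf k ℓ y c)) :
    ∀ m' : Fin 2,
      (fObj k ℓ r m' x < fObj k ℓ r m' y ↔ fB ℓ r m' (blockOf k ℓ x b) < fB ℓ r m' (blockOf k ℓ y b)) ∧
      (fObj k ℓ r m' x > fObj k ℓ r m' y ↔ fB ℓ r m' (blockOf k ℓ x b) > fB ℓ r m' (blockOf k ℓ y b)) := by
  intro m'
  have hpre : ∀ c < b, fB ℓ r m' (blockOf k ℓ x c) = fB ℓ r m' (blockOf k ℓ y c) :=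
    fun c hc => (fB_eq_iff_fB_eq m m').1 (hbmin c hc)
  have hne : fB ℓ r m' (blockOf k ℓ x b) ≠ fB ℓ r m' (blockOf k ℓ y b) :=
    mt (fB_eq_iff_fB_eq m m').2 hb
  rw [fObj_eq_sum, fObj_eq_sum]
  exact ⟨sum_pow_mul_lt_iff (fun _ => fB_lt ..) (fun _ => fB_lt ..) hpre hne,
    sum_pow_mul_lt_iff (fun _ => fB_lt ..) (fun _ => fB_lt ..) (fun c hc => (hpre c hc).symm)
      hne.symm⟩

/-- If `f_m(x) ≠ f_m(y)` and `b` is minimal with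
`f_m^B(x_{B_b}) ≠ f_m^B(y_{B_b})`, then for every objective `m'`, the full
function values of `x` and `y` compare exactly like the base function values on
block `b`. -/
theorem stmt_7 (k ℓ r : ℕ) (hk : 0 < k) (hℓ : 0 < ℓ) (hr : r ≤ ℓ)
    (x y : Fin (k * ℓ) → Bool) (m : Fin 2)
    (hne : fObj k ℓ r m x ≠ fObj k ℓ r m y)
    (b : Fin k)
    (hb : fB ℓ r m (blockOf k ℓ x b) ≠ fB ℓ r m (blockOf k ℓ y b))
    (hbmin : ∀ c : Fin k, c < b → fB ℓ r m (blockOf k ℓ x c) = fB ℓ r m (blockOf k ℓ y c)) :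
    ∀ m' : Fin 2,
      (fObj k ℓ r m' x < fObj k ℓ r m' y ↔ fB ℓ r m' (blockOf k ℓ x b) < fB ℓ r m' (blockOf k ℓ y b)) ∧
      (fObj k ℓ r m' x > fObj k ℓ r m' y ↔ fB ℓ r m' (blockOf k ℓ x b) > fB ℓ r m' (blockOf k ℓ y b)) :=
  stmt_7_general k ℓ r x y m b hb hbmin
end

section
/- The map from {1,2}^k to ℕ² sending a choice vector v = (v₁,...,v_k) to the objective vector f(x^v), where x^v is the bitstring whose b-th block is z¹ if v_b = 1 and z² if v_b = 2, is injective. -/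
/-- The bitstring `x^v` whose `b`-th block is `z¹` if `v b = true` and `z²`
otherwise. -/
def xOf (k ℓ r : ℕ) (hℓ : 0 < ℓ) (v : Fin k → Bool) : Fin (k * ℓ) → Bool :=
  fun i =>
    if v ⟨i.val / ℓ, Nat.div_lt_of_lt_mul (Nat.mul_comm k ℓ ▸ i.isLt)⟩
    then zOne ℓ ⟨i.val % ℓ, Nat.mod_lt _ hℓ⟩
    else zTwo ℓ r ⟨i.val % ℓ, Nat.mod_lt _ hℓ⟩

lemma card_lt_filter (ℓ m : ℕ) (h : m ≤ ℓ) :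
    (Finset.univ.filter (fun i : Fin ℓ => i.val < m)).card = m := by
  rw [Finset.card_filter, Fin.sum_univ_eq_sum_range (fun i => if i < m then 1 else 0),
    ← Finset.card_filter]
  have : Finset.filter (fun i => i < m) (Finset.range ℓ) = Finset.range m := by
    ext i; simp; omega
  rw [this, Finset.card_range]

lemma LO_one_one (ℓ : ℕ) : LO ℓ (zOne ℓ) (zOne ℓ) = ℓ := by unfold LO zOne; simp
lemma LO_two_two (ℓ r : ℕ) : LO ℓ (zTwo ℓ r) (zTwo ℓ r) = ℓ := by unfold LO; simp

lemma LO_one_two (ℓ r : ℕ) : LO ℓ (zOne ℓ) (zTwo ℓ r) = ℓ - r := by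
  unfold LO zOne zTwo
  have h : (Finset.univ.filter (fun i : Fin ℓ => ∀ j ≤ i, decide (j.val < ℓ - r) = true))
      = Finset.univ.filter (fun i : Fin ℓ => i.val < ℓ - r) := by
    ext i
    simp only [Finset.mem_filter, Finset.mem_univ, true_and, decide_eq_true_eq]
    constructor
    · intro h; exact h i le_rfl
    · intro h j hj; exact lt_of_le_of_lt (Fin.le_def.mp hj) h
  rw [h, card_lt_filter ℓ (ℓ - r) (Nat.sub_le _ _)]

lemma LO_two_one (ℓ r : ℕ) : LO ℓ (zTwo ℓ r) (zOne ℓ) = ℓ - r := by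
  unfold LO zOne zTwo
  have h : (Finset.univ.filter (fun i : Fin ℓ => ∀ j ≤ i, true = decide (j.val < ℓ - r)))
      = Finset.univ.filter (fun i : Fin ℓ => i.val < ℓ - r) := by
    ext i
    simp only [Finset.mem_filter, Finset.mem_univ, true_and, eq_comm (a := true),
      decide_eq_true_eq]
    constructor
    · intro h; exact h i le_rfl
    · intro h j hj; exact lt_of_le_of_lt (Fin.le_def.mp hj) h
  rw [h, card_lt_filter ℓ (ℓ - r) (Nat.sub_le _ _)]

lemma digit_bound (M : ℕ) (hM : 1 ≤ M) :
    ∀ (k : ℕ) (a : Fin k → ℕ), (∀ b, a b < M) → (∑ b : Fin k, M^(k-1-b.val) * a b) < M^k := by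
  intro k
  induction k with
  | zero => intro a _; simp
  | succ k ih =>
    intro a ha
    rw [Fin.sum_univ_succ]
    have h1 : ∑ b : Fin k, M^(k+1-1-(b.succ).val) * a b.succ
        = ∑ b : Fin k, M^(k-1-b.val) * a b.succ := by
      apply Finset.sum_congr rfl; intro b _
      have : k+1-1-(b.succ).val = k-1-b.val := by simp [Fin.val_succ]; omega
      rw [this]
    rw [h1]
    have h2 := ih (fun b => a b.succ) (fun b => ha b.succ)
    have h3 : M^(k+1-1-(0:Fin (k+1)).val) * a 0 ≤ M^k * (M-1) := by
      simp only [Fin.val_zero, Nat.sub_zero, Nat.add_sub_cancel]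
      exact Nat.mul_le_mul_left _ (by have := ha 0; omega)
    have h4 : M^k * (M-1) + M^k = M^(k+1) := by
      rw [pow_succ, ← Nat.mul_succ]
      congr 1
      omega
    simp only [Fin.val_zero, Nat.sub_zero, Nat.add_sub_cancel] at h3 ⊢
    omega

lemma digit_inj (M : ℕ) (hM : 1 ≤ M) :
    ∀ (k : ℕ) (a a' : Fin k → ℕ), (∀ b, a b < M) → (∀ b, a' b < M) →
    (∑ b : Fin k, M^(k-1-b.val) * a b) = (∑ b : Fin k, M^(k-1-b.val) * a' b) → a = a' := by
  intro k
  induction k with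
  | zero => intro a a' _ _ _; funext b; exact absurd b.isLt (by omega)
  | succ k ih =>
    intro a a' ha ha' heq
    rw [Fin.sum_univ_succ, Fin.sum_univ_succ] at heq
    have hc : ∀ (c : Fin (k+1) → ℕ), ∑ b : Fin k, M^(k+1-1-(b.succ).val) * c b.succ
        = ∑ b : Fin k, M^(k-1-b.val) * c b.succ := by
      intro c; apply Finset.sum_congr rfl; intro b _
      have : k+1-1-(b.succ).val = k-1-b.val := by simp [Fin.val_succ]; omega
      rw [this]
    rw [hc a, hc a'] at heq
    simp only [Fin.val_zero, Nat.sub_zero, Nat.add_sub_cancel] at heq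
    have hs := digit_bound M hM k (fun b => a b.succ) (fun b => ha b.succ)
    have hs' := digit_bound M hM k (fun b => a' b.succ) (fun b => ha' b.succ)
    have hMk : 0 < M^k := pow_pos (by omega) k
    have h0 : a 0 = a' 0 := by
      have e1 : (M^k * a 0 + ∑ b : Fin k, M^(k-1-b.val) * a b.succ) / M^k = a 0 := by
        rw [Nat.mul_add_div hMk, Nat.div_eq_of_lt hs]; omega
      have e2 : (M^k * a' 0 + ∑ b : Fin k, M^(k-1-b.val) * a' b.succ) / M^k = a' 0 := by
        rw [Nat.mul_add_div hMk, Nat.div_eq_of_lt hs']; omega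
      rw [← e1, ← e2, heq]
    rw [h0] at heq
    have htail : (fun b : Fin k => a b.succ) = (fun b => a' b.succ) := by
      apply ih _ _ (fun b => ha b.succ) (fun b => ha' b.succ)
      omega
    funext b
    refine Fin.cases ?_ ?_ b
    · exact h0
    · intro i; exact congrFun htail i

/-- The map sending a choice vector `v ∈ {1,2}^k` to the objective
vector `f(x^v)` is injective. -/
theorem stmt_16 (k ℓ r : ℕ) (hk : 0 < k) (hℓ : 0 < ℓ) (hr1 : 1 ≤ r) (hr : r ≤ ℓ) :
    Function.Injective (fun v : Fin k → Bool =>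
      (fObj k ℓ r 0 (xOf k ℓ r hℓ v), fObj k ℓ r 1 (xOf k ℓ r hℓ v))) := by
  set A := (ℓ+1)*ℓ + (ℓ-r) with hAdef
  set B := (ℓ+1)*(ℓ-r) + ℓ with hBdef
  have hsq : (ℓ+1)^2 = (ℓ+1)*ℓ + (ℓ+1) := by ring
  have hA : A < (ℓ+1)^2 := by omega
  have hB : B < (ℓ+1)^2 := by
    have : (ℓ+1)*(ℓ-r) ≤ (ℓ+1)*ℓ := Nat.mul_le_mul_left _ (Nat.sub_le _ _)
    omega
  have hAB : A ≠ B := by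
    have h1 : (ℓ+1)*(ℓ-r) + (ℓ+1)*r = (ℓ+1)*ℓ := by
      rw [← Nat.mul_add, Nat.sub_add_cancel hr]
    have h2 : 2*r ≤ (ℓ+1)*r := Nat.mul_le_mul_right r (by omega)
    omega
  have hblock : ∀ (v : Fin k → Bool) (b : Fin k),
      blockOf k ℓ (xOf k ℓ r hℓ v) b = if v b then zOne ℓ else zTwo ℓ r := by
    intro v b
    funext j
    show xOf k ℓ r hℓ v _ = _
    unfold xOf
    have hdiv : (b.val * ℓ + j.val) / ℓ = b.val := by
      rw [Nat.mul_comm, Nat.mul_add_div hℓ, Nat.div_eq_of_lt j.isLt]; omega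
    have hmod : (b.val * ℓ + j.val) % ℓ = j.val := by
      rw [Nat.mul_comm, Nat.mul_add_mod]
      exact Nat.mod_eq_of_lt j.isLt
    simp only [hdiv, hmod, Fin.eta]
    cases hv : v b <;> simp [hv, zOne, zTwo]
  have hsum : ∀ (v : Fin k → Bool), fObj k ℓ r 0 (xOf k ℓ r hℓ v)
      = ∑ b : Fin k, ((ℓ+1)^2)^(k-1-b.val) * (if v b then A else B) := by
    intro v
    unfold fObj
    apply Finset.sum_congr rfl
    intro b _
    rw [hblock, ← pow_mul]
    have hfB : fB ℓ r 0 = f1B ℓ r := by simp [fB]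
    rw [hfB]
    cases hv : v b <;>
      simp [hv, f1B, LO_one_one, LO_two_two, LO_one_two, LO_two_one, hAdef, hBdef]
  intro v w hpair
  have h := congrArg Prod.fst hpair
  simp only at h
  rw [hsum v, hsum w] at h
  have hM : 1 ≤ (ℓ+1)^2 := Nat.one_le_iff_ne_zero.mpr (by positivity)
  have hkey := digit_inj ((ℓ+1)^2) hM k (fun b => if v b then A else B)
    (fun b => if w b then A else B)
    (fun b => by split <;> assumption)
    (fun b => by split <;> assumption) h
  funext b
  have := congrFun hkey b
  cases hv : v b <;> cases hw : w b <;> simp [hv, hw] at this ⊢ <;> exact absurd this (by omega)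
end
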